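/- Let x ∈ (0,1] and let C be a bivariate copula with ξ(C) = x and ψ(C) = √x. Then C is the Fréchet copula with parameter √x, i.e. C(u,v) = (1−√x)uv + √x·min(u,v) for all (u,v) ∈ [0,1]²; equivalently, ∂₁C(t,v) = (1−√x)v + √x·𝟙_{t≤v} for almost every (t,v) ∈ [0,1]². -/

import Mathlib

open MeasureTheory Set

noncomputable section

def IsCopula (C : ℝ → ℝ → ℝ) : Prop :=
  (∀ u ∈ Icc (0:ℝ) 1, ∀ v ∈ Icc (0:ℝ) 1, C u v ∈ Icc (0:ℝ) 1) ∧
  (∀ u ∈ Icc (0:ℝ) 1, C u 0 = 0 ∧ C u 1 = u) ∧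
  (∀ v ∈ Icc (0:ℝ) 1, C 0 v = 0 ∧ C 1 v = v) ∧
  (∀ u₁ ∈ Icc (0:ℝ) 1, ∀ u₂ ∈ Icc (0:ℝ) 1, ∀ v₁ ∈ Icc (0:ℝ) 1, ∀ v₂ ∈ Icc (0:ℝ) 1,
    u₁ ≤ u₂ → v₁ ≤ v₂ → 0 ≤ C u₂ v₂ - C u₁ v₂ - C u₂ v₁ + C u₁ v₁)

/-- The (a.e. defined) partial derivative of `C` with respect to its first argument. -/
def d1 (C : ℝ → ℝ → ℝ) (t v : ℝ) : ℝ := deriv (fun s => C s v) t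

/-- Chatterjee's rank correlation. -/
def xi (C : ℝ → ℝ → ℝ) : ℝ :=
  6 * (∫ v in (0:ℝ)..1, ∫ t in (0:ℝ)..1, (d1 C t v) ^ 2) - 2

/-- Spearman's footrule. -/
def psi (C : ℝ → ℝ → ℝ) : ℝ :=
  6 * (∫ v in (0:ℝ)..1, C v v) - 2

/-- Stochastically increasing: for each `v`, `t ↦ ∂₁C(t,v)` agrees a.e. on `[0,1]`
with a non-increasing function. -/
def IsSI (C : ℝ → ℝ → ℝ) : Prop :=
  ∀ v ∈ Icc (0:ℝ) 1, ∃ g : ℝ → ℝ, AntitoneOn g (Icc (0:ℝ) 1) ∧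
    (∀ᵐ t ∂(volume.restrict (Icc (0:ℝ) 1)), d1 C t v = g t)

/-
With `r = √x`, expand `∫∫ (∂₁C(t,v) - ∂₁C^Fr_r(t,v))² dt dv`. Since `∫₀¹ ∂₁C(t,v) dt = v` and
`∫₀^v ∂₁C(t,v) dt = C(v,v)`, it equals `(ξ(C) - 2 r ψ(C) + r²) / 6`, which is `0` when
`ξ(C) = x` and `ψ(C) = √x`. Hence `∂₁C = ∂₁C^Fr_r` almost everywhere; integrating in `t` gives
`C = C^Fr_r` on `[0,1] × {v}` for almost every `v`, and continuity of `C` in `v` extends this to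
the whole square.
-/

open Filter Topology intervalIntegral
open scoped ENNReal Interval

lemma ae_mem_Ioo_prod_Ioo :
    ∀ᵐ p ∂(volume.restrict (Ioc (0:ℝ) 1)).prod (volume.restrict (Ioc (0:ℝ) 1)),
      p ∈ Ioo (0:ℝ) 1 ×ˢ Ioo (0:ℝ) 1 := by
  rw [← Measure.restrict_congr_set Ioo_ae_eq_Ioc, Measure.prod_restrict]
  exact ae_restrict_mem (measurableSet_Ioo.prod measurableSet_Ioo)

lemma intervalIntegrable_sub_const_sq {g : ℝ → ℝ} {a b : ℝ} (c : ℝ)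
    (hg : IntervalIntegrable g volume a b)
    (hg2 : IntervalIntegrable (fun t => g t ^ 2) volume a b) :
    IntervalIntegrable (fun t => (g t - c) ^ 2) volume a b := by
  simpa only [sub_sq] using (hg2.sub ((hg.const_mul 2).mul_const c)).add intervalIntegrable_const

lemma integral_sub_const_sq {g : ℝ → ℝ} {a b : ℝ} (c : ℝ) (hg : IntervalIntegrable g volume a b)
    (hg2 : IntervalIntegrable (fun t => g t ^ 2) volume a b) :
    ∫ t in a..b, (g t - c) ^ 2
      = (∫ t in a..b, g t ^ 2) - 2 * c * (∫ t in a..b, g t) + c ^ 2 * (b - a) := by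
  simp_rw [sub_sq]
  rw [integral_add (hg2.sub ((hg.const_mul 2).mul_const c)) intervalIntegrable_const,
    integral_sub hg2 ((hg.const_mul 2).mul_const c), intervalIntegral.integral_mul_const,
    intervalIntegral.integral_const_mul, intervalIntegral.integral_const, smul_eq_mul]
  ring

lemma integral_sub_ite_sq {g : ℝ → ℝ} {a s b : ℝ} (c₁ c₀ : ℝ) (hs : s ∈ Icc a b)
    (hg : IntervalIntegrable g volume a b)
    (hg2 : IntervalIntegrable (fun t => g t ^ 2) volume a b) :
    ∫ t in a..b, (g t - if t ≤ s then c₁ else c₀) ^ 2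
      = (∫ t in a..b, g t ^ 2) - 2 * c₁ * (∫ t in a..s, g t) - 2 * c₀ * (∫ t in s..b, g t)
        + c₁ ^ 2 * (s - a) + c₀ ^ 2 * (b - s) := by
  have hs' : s ∈ [[a, b]] := by rwa [uIcc_of_le (hs.1.trans hs.2)]
  have hsub₁ : [[a, s]] ⊆ [[a, b]] := uIcc_subset_uIcc_left hs'
  have hsub₀ : [[s, b]] ⊆ [[a, b]] := uIcc_subset_uIcc_right hs'
  have e₁ : EqOn (fun t => (g t - if t ≤ s then c₁ else c₀) ^ 2) (fun t => (g t - c₁) ^ 2)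
      (uIoo a s) := by
    intro t ht
    rw [uIoo_of_le hs.1] at ht
    simp [ht.2.le]
  have e₀ : EqOn (fun t => (g t - if t ≤ s then c₁ else c₀) ^ 2) (fun t => (g t - c₀) ^ 2)
      (uIoo s b) := by
    intro t ht
    rw [uIoo_of_le hs.2] at ht
    simp [not_le.2 ht.1]
  rw [← integral_add_adjacent_intervals
      ((intervalIntegrable_congr_uIoo e₁).2 <|
        intervalIntegrable_sub_const_sq c₁ (hg.mono_set hsub₁) (hg2.mono_set hsub₁))
      ((intervalIntegrable_congr_uIoo e₀).2 <|
        intervalIntegrable_sub_const_sq c₀ (hg.mono_set hsub₀) (hg2.mono_set hsub₀)),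
    integral_congr_uIoo e₁, integral_congr_uIoo e₀,
    integral_sub_const_sq c₁ (hg.mono_set hsub₁) (hg2.mono_set hsub₁),
    integral_sub_const_sq c₀ (hg.mono_set hsub₀) (hg2.mono_set hsub₀),
    ← integral_add_adjacent_intervals (hg2.mono_set hsub₁) (hg2.mono_set hsub₀)]
  ring

lemma ae_ae_eq_zero_of_integral_integral_eq_zero {α β : Type*} [MeasurableSpace α]
    [MeasurableSpace β] {μ : Measure α} {ν : Measure β} [SFinite μ] [SFinite ν] {f : α × β → ℝ}
    (hf : Integrable f (μ.prod ν)) (hf₀ : 0 ≤ f) (h : ∫ x, ∫ y, f (x, y) ∂ν ∂μ = 0) :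
    ∀ᵐ x ∂μ, ∀ᵐ y ∂ν, f (x, y) = 0 :=
  Measure.ae_ae_of_ae_prod <| (integral_eq_zero_iff_of_nonneg hf₀ hf).1 <| by
    rwa [integral_prod f hf]

def frechetCopula (r u v : ℝ) : ℝ := (1 - r) * u * v + r * min u v

def frechetCopulaD1 (r t v : ℝ) : ℝ := (1 - r) * v + r * (if t ≤ v then 1 else 0)

lemma hasDerivAt_frechetCopula {r t v : ℝ} (htv : t ≠ v) :
    HasDerivAt (fun s => frechetCopula r s v) (frechetCopulaD1 r t v) t := by
  rcases htv.lt_or_gt with h | h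
  · have hlin : (fun s => frechetCopula r s v) =ᶠ[𝓝 t] fun s => ((1 - r) * v + r) * s := by
      filter_upwards [Iio_mem_nhds h] with s hs
      rw [frechetCopula, min_eq_left (le_of_lt hs)]
      ring
    simpa [frechetCopulaD1, h.le] using
      ((hasDerivAt_id t).const_mul ((1 - r) * v + r)).congr_of_eventuallyEq hlin
  · have hlin : (fun s => frechetCopula r s v) =ᶠ[𝓝 t] fun s => (1 - r) * v * s + r * v := by
      filter_upwards [Ioi_mem_nhds h] with s hs
      rw [frechetCopula, min_eq_right (le_of_lt hs)]
      ring
    simpa [frechetCopulaD1, not_le.2 h] using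
      (((hasDerivAt_id t).const_mul ((1 - r) * v)).add_const (r * v)).congr_of_eventuallyEq hlin

lemma integral_frechetCopulaD1 (r : ℝ) {u v : ℝ} (hu : 0 ≤ u) (hv : 0 ≤ v) :
    ∫ t in (0:ℝ)..u, frechetCopulaD1 r t v = frechetCopula r u v := by
  have hind : ∀ t, frechetCopulaD1 r t v = (1 - r) * v + (Iic v).indicator (fun _ => r) t := by
    intro t; by_cases h : t ≤ v <;> simp [frechetCopulaD1, h]
  have hint : IntervalIntegrable ((Iic v).indicator fun _ => r) volume 0 u :=
    intervalIntegrable_iff.2 ((integrableOn_const (by simp)).indicator measurableSet_Iic)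
  simp_rw [hind]
  rw [integral_add intervalIntegrable_const hint, intervalIntegral.integral_const,
    integral_of_le hu, MeasureTheory.integral_indicator measurableSet_Iic,
    Measure.restrict_restrict measurableSet_Iic, inter_comm, Ioc_inter_Iic, setIntegral_const]
  simp only [sub_zero, smul_eq_mul, Real.volume_real_Ioc, le_inf_iff, hu, hv, and_self,
    sup_of_le_left, frechetCopula]
  ring

lemma memLp_frechetCopulaD1 (r : ℝ) (p : ℝ≥0∞) :
    MemLp (fun q : ℝ × ℝ => frechetCopulaD1 r q.2 q.1) p
      ((volume.restrict (Ioc (0:ℝ) 1)).prod (volume.restrict (Ioc (0:ℝ) 1))) := by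
  have hmeas : Measurable fun q : ℝ × ℝ => frechetCopulaD1 r q.2 q.1 := by
    unfold frechetCopulaD1
    exact (measurable_fst.const_mul _).add (Measurable.const_mul
      (Measurable.ite (measurableSet_le measurable_snd measurable_fst) measurable_const
        measurable_const) _)
  refine MemLp.of_bound hmeas.aestronglyMeasurable (|1 - r| + |r|) ?_
  filter_upwards [ae_mem_Ioo_prod_Ioo] with q hq
  have hind : |(if q.2 ≤ q.1 then (1:ℝ) else 0)| ≤ 1 := by split_ifs <;> norm_num
  calc ‖frechetCopulaD1 r q.2 q.1‖
      ≤ |1 - r| * |q.1| + |r| * |(if q.2 ≤ q.1 then (1:ℝ) else 0)| := by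
        rw [Real.norm_eq_abs, frechetCopulaD1, ← abs_mul, ← abs_mul]
        exact abs_add_le _ _
    _ ≤ |1 - r| * 1 + |r| * 1 := by
        gcongr
        exact abs_le.2 ⟨by linarith [hq.1.1], hq.1.2.le⟩
    _ = |1 - r| + |r| := by ring

namespace IsCopula

variable {C : ℝ → ℝ → ℝ} {r u v : ℝ}

lemma swap (hC : IsCopula C) : IsCopula (fun u v => C v u) := by
  obtain ⟨hrange, hleft, hright, hrect⟩ := hC
  refine ⟨fun u hu v hv => hrange v hv u hu, hright, hleft, ?_⟩
  intro u₁ hu₁ u₂ hu₂ v₁ hv₁ v₂ hv₂ hu hv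
  linarith [hrect v₁ hv₁ v₂ hv₂ u₁ hu₁ u₂ hu₂ hv hu]

lemma sub_mem_Icc_left (hC : IsCopula C) {u₁ u₂ : ℝ} (hu₁ : u₁ ∈ Icc (0:ℝ) 1)
    (hu₂ : u₂ ∈ Icc (0:ℝ) 1) (hv : v ∈ Icc (0:ℝ) 1) (h : u₁ ≤ u₂) :
    C u₂ v - C u₁ v ∈ Icc 0 (u₂ - u₁) := by
  obtain ⟨-, hleft, -, hrect⟩ := hC
  have h0 : (0:ℝ) ∈ Icc (0:ℝ) 1 := by norm_num
  have h1 : (1:ℝ) ∈ Icc (0:ℝ) 1 := by norm_num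
  constructor
  · linarith [hrect u₁ hu₁ u₂ hu₂ 0 h0 v hv h hv.1, (hleft u₁ hu₁).1, (hleft u₂ hu₂).1]
  · linarith [hrect u₁ hu₁ u₂ hu₂ v hv 1 h1 h hv.2, (hleft u₁ hu₁).2, (hleft u₂ hu₂).2]

lemma lipschitzOnWith_left (hC : IsCopula C) (hv : v ∈ Icc (0:ℝ) 1) :
    LipschitzOnWith 1 (fun u => C u v) (Icc 0 1) := by
  refine LipschitzOnWith.of_dist_le_mul fun u₁ hu₁ u₂ hu₂ => ?_
  simp only [NNReal.coe_one, one_mul, Real.dist_eq]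
  rcases le_total u₁ u₂ with h | h
  · have := hC.sub_mem_Icc_left hu₁ hu₂ hv h
    rw [abs_sub_comm, abs_sub_comm u₁, abs_of_nonneg this.1, abs_of_nonneg (sub_nonneg.2 h)]
    exact this.2
  · have := hC.sub_mem_Icc_left hu₂ hu₁ hv h
    rw [abs_of_nonneg this.1, abs_of_nonneg (sub_nonneg.2 h)]
    exact this.2

lemma lipschitzOnWith_right (hC : IsCopula C) (hu : u ∈ Icc (0:ℝ) 1) :
    LipschitzOnWith 1 (fun v => C u v) (Icc 0 1) :=
  hC.swap.lipschitzOnWith_left hu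

lemma continuousOn_uncurry (hC : IsCopula C) :
    ContinuousOn (Function.uncurry C) (Icc 0 1 ×ˢ Icc 0 1) :=
  continuousOn_prod_of_continuousOn_lipschitzOnWith _ 1
    (fun _ hu => (hC.lipschitzOnWith_right hu).continuousOn) fun _ hv => hC.lipschitzOnWith_left hv

lemma abs_d1_le_one (hC : IsCopula C) {t : ℝ} (ht : t ∈ Ioo (0:ℝ) 1) (hv : v ∈ Icc (0:ℝ) 1) :
    |d1 C t v| ≤ 1 := by
  simpa [d1] using
    norm_deriv_le_of_lipschitzOn (Icc_mem_nhds ht.1 ht.2) (hC.lipschitzOnWith_left hv)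

lemma integral_d1 (hC : IsCopula C) {a b : ℝ} (ha : a ∈ Icc (0:ℝ) 1) (hb : b ∈ Icc (0:ℝ) 1)
    (hv : v ∈ Icc (0:ℝ) 1) : ∫ t in a..b, d1 C t v = C b v - C a v :=
  ((hC.lipschitzOnWith_left hv).mono (uIcc_subset_Icc ha hb)).absolutelyContinuousOnInterval
    |>.integral_deriv_eq_sub

lemma intervalIntegrable_d1 (hC : IsCopula C) {a b : ℝ} (ha : a ∈ Icc (0:ℝ) 1)
    (hb : b ∈ Icc (0:ℝ) 1) (hv : v ∈ Icc (0:ℝ) 1) :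
    IntervalIntegrable (fun t => d1 C t v) volume a b :=
  ((hC.lipschitzOnWith_left hv).mono (uIcc_subset_Icc ha hb)).absolutelyContinuousOnInterval
    |>.intervalIntegrable_deriv

/- `C` is only known on the square: composing it with the projection onto `[0,1]` gives a jointly
continuous function with the same `∂₁` in the interior, to which `measurable_deriv_with_param`
applies. -/
lemma aestronglyMeasurable_d1 (hC : IsCopula C) :
    AEStronglyMeasurable (fun p : ℝ × ℝ => d1 C p.2 p.1)
      ((volume.restrict (Ioc (0:ℝ) 1)).prod (volume.restrict (Ioc (0:ℝ) 1))) := by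
  let π : ℝ → ℝ := fun s => projIcc (0:ℝ) 1 zero_le_one s
  have hcont : Continuous (Function.uncurry fun v t => C (π t) (π v)) :=
    hC.continuousOn_uncurry.comp_continuous (f := fun p : ℝ × ℝ => (π p.2, π p.1))
      (by fun_prop) fun p => ⟨(projIcc _ _ zero_le_one p.2).2, (projIcc _ _ zero_le_one p.1).2⟩
  refine (measurable_deriv_with_param hcont).aestronglyMeasurable.congr ?_
  filter_upwards [ae_mem_Ioo_prod_Ioo] with p ⟨hv, ht⟩
  refine Filter.EventuallyEq.deriv_eq ?_
  filter_upwards [Ioo_mem_nhds ht.1 ht.2] with s hs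
  simp [π, projIcc_of_mem _ (Ioo_subset_Icc_self hs), projIcc_of_mem _ (Ioo_subset_Icc_self hv)]

lemma intervalIntegrable_d1_sq (hC : IsCopula C) (hv : v ∈ Icc (0:ℝ) 1) :
    IntervalIntegrable (fun t => d1 C t v ^ 2) volume 0 1 := by
  have h0 : (0:ℝ) ∈ Icc (0:ℝ) 1 := by norm_num
  have h1 : (1:ℝ) ∈ Icc (0:ℝ) 1 := by norm_num
  rw [intervalIntegrable_iff_integrableOn_Ioc_of_le zero_le_one]
  refine (MemLp.of_bound (hC.intervalIntegrable_d1 h0 h1 hv).1.aestronglyMeasurable 1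
    ?_).integrable_sq
  rw [← Measure.restrict_congr_set Ioo_ae_eq_Ioc]
  filter_upwards [ae_restrict_mem measurableSet_Ioo] with t ht
  simpa using hC.abs_d1_le_one ht hv

lemma memLp_d1 (hC : IsCopula C) (p : ℝ≥0∞) :
    MemLp (fun q : ℝ × ℝ => d1 C q.2 q.1) p
      ((volume.restrict (Ioc (0:ℝ) 1)).prod (volume.restrict (Ioc (0:ℝ) 1))) := by
  refine MemLp.of_bound hC.aestronglyMeasurable_d1 1 ?_
  filter_upwards [ae_mem_Ioo_prod_Ioo] with q ⟨hv, ht⟩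
  simpa using hC.abs_d1_le_one ht (Ioo_subset_Icc_self hv)

lemma integral_sq_d1_sub_frechetCopulaD1 (hC : IsCopula C) (r : ℝ) (hv : v ∈ Icc (0:ℝ) 1) :
    ∫ t in (0:ℝ)..1, (d1 C t v - frechetCopulaD1 r t v) ^ 2
      = (∫ t in (0:ℝ)..1, d1 C t v ^ 2) - 2 * r * C v v - (1 - r) ^ 2 * v ^ 2 + r ^ 2 * v := by
  have h0 : (0:ℝ) ∈ Icc (0:ℝ) 1 := by norm_num
  have h1 : (1:ℝ) ∈ Icc (0:ℝ) 1 := by norm_num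
  have hF : ∀ t, frechetCopulaD1 r t v = if t ≤ v then (1 - r) * v + r else (1 - r) * v := by
    intro t; split_ifs with h <;> simp [frechetCopulaD1, h]
  simp_rw [hF]
  rw [integral_sub_ite_sq _ _ hv (hC.intervalIntegrable_d1 h0 h1 hv)
      (hC.intervalIntegrable_d1_sq hv), hC.integral_d1 h0 hv hv, hC.integral_d1 hv h1 hv,
    (hC.2.2.1 v hv).1, (hC.2.2.1 v hv).2]
  ring

theorem integral_integral_sq_d1_sub_frechetCopulaD1 (hC : IsCopula C) (r : ℝ) :
    ∫ v in (0:ℝ)..1, ∫ t in (0:ℝ)..1, (d1 C t v - frechetCopulaD1 r t v) ^ 2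
      = (xi C - 2 * r * psi C + r ^ 2) / 6 := by
  have hA : IntervalIntegrable (fun v => ∫ t in (0:ℝ)..1, d1 C t v ^ 2) volume 0 1 := by
    rw [intervalIntegrable_iff_integrableOn_Ioc_of_le zero_le_one]
    simp only [integral_of_le zero_le_one]
    exact (hC.memLp_d1 2).integrable_sq.integral_prod_left
  have hD : IntervalIntegrable (fun v => C v v) volume 0 1 :=
    (hC.continuousOn_uncurry.comp (continuousOn_id.prodMk continuousOn_id)
      fun _ hv => ⟨hv, hv⟩).intervalIntegrable_of_Icc zero_le_one
  have hP : IntervalIntegrable (fun v : ℝ => r ^ 2 * v - (1 - r) ^ 2 * v ^ 2) volume 0 1 :=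
    (by fun_prop : Continuous fun v : ℝ => r ^ 2 * v - (1 - r) ^ 2 * v ^ 2).intervalIntegrable 0 1
  calc _ = ∫ v in (0:ℝ)..1, ((∫ t in (0:ℝ)..1, d1 C t v ^ 2) - 2 * r * C v v
          + (r ^ 2 * v - (1 - r) ^ 2 * v ^ 2)) := by
        refine integral_congr fun v hv => ?_
        rw [uIcc_of_le zero_le_one] at hv
        simp only [hC.integral_sq_d1_sub_frechetCopulaD1 r hv]
        ring
    _ = (∫ v in (0:ℝ)..1, ∫ t in (0:ℝ)..1, d1 C t v ^ 2) - 2 * r * (∫ v in (0:ℝ)..1, C v v)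
          + (r ^ 2 / 2 - (1 - r) ^ 2 / 3) := by
        rw [integral_add (hA.sub (hD.const_mul _)) hP, integral_sub hA (hD.const_mul _),
          intervalIntegral.integral_const_mul,
          integral_sub ((by fun_prop : Continuous fun v : ℝ => r ^ 2 * v).intervalIntegrable _ _)
            ((by fun_prop : Continuous fun v : ℝ => (1 - r) ^ 2 * v ^ 2).intervalIntegrable _ _),
          intervalIntegral.integral_const_mul, intervalIntegral.integral_const_mul, integral_id,
          integral_pow]
        ring
    _ = (xi C - 2 * r * psi C + r ^ 2) / 6 := by
        simp only [xi, psi]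
        ring

theorem ae_ae_d1_eq_frechetCopulaD1 (hC : IsCopula C) (h : xi C - 2 * r * psi C + r ^ 2 = 0) :
    ∀ᵐ v ∂volume.restrict (Ioc (0:ℝ) 1), ∀ᵐ t ∂volume.restrict (Ioc (0:ℝ) 1),
      d1 C t v = frechetCopulaD1 r t v := by
  have hQ := ((hC.memLp_d1 2).sub (memLp_frechetCopulaD1 r 2)).integrable_sq
  have hQ₀ : ∫ v in Ioc (0:ℝ) 1, ∫ t in Ioc (0:ℝ) 1,
      (d1 C t v - frechetCopulaD1 r t v) ^ 2 = 0 := by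
    simpa [integral_of_le, h] using hC.integral_integral_sq_d1_sub_frechetCopulaD1 r
  filter_upwards [ae_ae_eq_zero_of_integral_integral_eq_zero hQ (fun _ => sq_nonneg _) hQ₀]
    with v hv
  filter_upwards [hv] with t ht
  simpa [sub_eq_zero] using ht

lemma eq_frechetCopula_of_ae_d1_eq (hC : IsCopula C) (hu : u ∈ Icc (0:ℝ) 1)
    (hv : v ∈ Icc (0:ℝ) 1)
    (h : ∀ᵐ t ∂volume.restrict (Ioc (0:ℝ) 1), d1 C t v = frechetCopulaD1 r t v) :
    C u v = frechetCopula r u v := by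
  have h0 : (0:ℝ) ∈ Icc (0:ℝ) 1 := by norm_num
  calc C u v = ∫ t in (0:ℝ)..u, d1 C t v := by
        rw [hC.integral_d1 h0 hu hv, (hC.2.2.1 v hv).1, sub_zero]
    _ = ∫ t in (0:ℝ)..u, frechetCopulaD1 r t v := by
        refine integral_congr_ae ?_
        filter_upwards [(ae_restrict_iff' measurableSet_Ioc).1 h] with t ht htu
        rw [uIoc_of_le hu.1] at htu
        exact ht ⟨htu.1, htu.2.trans hu.2⟩
    _ = frechetCopula r u v := integral_frechetCopulaD1 r hu.1 hv.1

theorem eqOn_frechetCopula (hC : IsCopula C)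
    (h : ∀ᵐ v ∂volume.restrict (Ioc (0:ℝ) 1), ∀ᵐ t ∂volume.restrict (Ioc (0:ℝ) 1),
      d1 C t v = frechetCopulaD1 r t v) :
    ∀ u ∈ Icc (0:ℝ) 1, ∀ v ∈ Icc (0:ℝ) 1, C u v = frechetCopula r u v := by
  intro u hu
  refine Measure.eqOn_Icc_of_ae_eq volume zero_ne_one ?_ (hC.lipschitzOnWith_right hu).continuousOn
    (by unfold frechetCopula; fun_prop)
  rw [← Measure.restrict_congr_set Ioc_ae_eq_Icc]
  filter_upwards [h, ae_restrict_mem measurableSet_Ioc] with v hv hmem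
  exact hC.eq_frechetCopula_of_ae_d1_eq hu (Ioc_subset_Icc_self hmem) hv

end IsCopula

lemma ae_d1_eq_frechetCopulaD1_of_eqOn {C : ℝ → ℝ → ℝ} {r : ℝ}
    (h : ∀ u ∈ Icc (0:ℝ) 1, ∀ v ∈ Icc (0:ℝ) 1, C u v = frechetCopula r u v) :
    ∀ᵐ p ∂(volume : Measure (ℝ × ℝ)).restrict (Icc (0:ℝ) 1 ×ˢ Icc (0:ℝ) 1),
      d1 C p.1 p.2 = frechetCopulaD1 r p.1 p.2 := by
  have hoff : ∀ᵐ p ∂(volume : Measure ℝ).prod volume, p.1 ≠ p.2 := by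
    rw [Measure.ae_prod_iff_ae_ae (p := fun q : ℝ × ℝ => q.1 ≠ q.2)
      (measurableSet_eq_fun measurable_fst measurable_snd).compl]
    exact Eventually.of_forall fun t => (volume.ae_ne t).mono fun _ h => h.symm
  rw [Measure.volume_eq_prod, ← Measure.prod_restrict, ← Measure.restrict_congr_set Ioo_ae_eq_Icc,
    Measure.prod_restrict]
  filter_upwards [ae_restrict_mem (measurableSet_Ioo.prod measurableSet_Ioo),
    ae_restrict_of_ae hoff] with p ⟨ht, hv⟩ hne
  have hloc : (fun s => C s p.2) =ᶠ[𝓝 p.1] fun s => frechetCopula r s p.2 := by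
    filter_upwards [Ioo_mem_nhds ht.1 ht.2] with s hs
    exact h s (Ioo_subset_Icc_self hs) p.2 (Ioo_subset_Icc_self hv)
  rw [d1, hloc.deriv_eq]
  exact (hasDerivAt_frechetCopula hne).deriv

/-- If `ξ(C) = x ∈ (0,1]` and `ψ(C) = √x`, then `C` is the Fréchet copula
with parameter `√x`, pointwise on `[0,1]²`; equivalently, its first partial derivative equals
`(1-√x)v + √x·𝟙_{t ≤ v}` almost everywhere on `[0,1]²`. -/
theorem upper_bound_unique_maximizer (x : ℝ) (hx : x ∈ Ioc (0:ℝ) 1)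
    (C : ℝ → ℝ → ℝ) (hC : IsCopula C) (hxi : xi C = x) (hpsi : psi C = Real.sqrt x) :
    (∀ u ∈ Icc (0:ℝ) 1, ∀ v ∈ Icc (0:ℝ) 1,
        C u v = (1 - Real.sqrt x) * u * v + Real.sqrt x * min u v) ∧
    (∀ᵐ p ∂((volume : Measure (ℝ × ℝ)).restrict (Icc (0:ℝ) 1 ×ˢ Icc (0:ℝ) 1)),
        d1 C p.1 p.2 =
          (1 - Real.sqrt x) * p.2 + Real.sqrt x * (if p.1 ≤ p.2 then (1:ℝ) else 0)) := by
  have hsq : Real.sqrt x ^ 2 = x := Real.sq_sqrt hx.1.le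
  have hfrechet := hC.eqOn_frechetCopula (hC.ae_ae_d1_eq_frechetCopulaD1 (r := Real.sqrt x)
    (by rw [hxi, hpsi]; linear_combination -hsq))
  exact ⟨hfrechet, ae_d1_eq_frechetCopulaD1_of_eqOn hfrechet⟩
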